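/- arXiv:1107.2097 — 4 statements merged into one kernel-verified Lean document; each statement's English description precedes it below -/
import Mathlib

section
/- Let C be a partial quadrant in an sc-Banach space E, meaning there is a linear sc-isomorphism T: E → ℝᵏ ⊕ W with T(C) = [0,∞)ᵏ ⊕ W. Then the degeneracy index d_C(x) = #{i ∈ {1,...,k} : (T x)_i = 0}, for x ∈ C, is independent of the choice of the linear sc-isomorphism T. -/
/-!
Whether `x` can be moved a little in direction `v` and in direction `-v` without leaving `C`
does not refer to `T`. In quadrant coordinates this happens exactly when `T v` vanishes at
every coordinate where `T x` does, so these two-sided directions form a linear subspace whose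
codimension is the degeneracy index. Hence the index is intrinsic to `C` and `x`.
-/

open Filter Topology Module

section

variable {E : Type*} [AddCommGroup E] [Module ℝ E]

def twoSidedDirections (C : Set E) (x : E) : Set E :=
  {v | ∃ ε > (0 : ℝ), x + ε • v ∈ C ∧ x - ε • v ∈ C}

lemma twoSidedDirections_eq_preimage {F : Type*} [AddCommGroup F] [Module ℝ F]
    (T : E ≃ₗ[ℝ] F) (C : Set E) (x : E) :
    twoSidedDirections C x = T ⁻¹' twoSidedDirections (T '' C) (T x) := by
  ext v
  simp [twoSidedDirections, LinearEquiv.image_eq_preimage_symm]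

lemma eventually_nonneg_add_mul_and_sub_mul {a b : ℝ} (ha : 0 ≤ a) (hab : a = 0 → b = 0) :
    ∀ᶠ ε in 𝓝[>] (0 : ℝ), 0 ≤ a + ε * b ∧ 0 ≤ a - ε * b := by
  rcases ha.eq_or_lt with rfl | ha
  · simp [hab rfl]
  have hplus : Tendsto (fun ε : ℝ => a + ε * b) (𝓝 0) (𝓝 a) :=
    (by fun_prop : Continuous fun ε : ℝ => a + ε * b).tendsto' 0 a (by simp)
  have hminus : Tendsto (fun ε : ℝ => a - ε * b) (𝓝 0) (𝓝 a) :=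
    (by fun_prop : Continuous fun ε : ℝ => a - ε * b).tendsto' 0 a (by simp)
  exact nhdsWithin_le_nhds <| ((hplus.eventually (eventually_ge_nhds ha)).and
    (hminus.eventually (eventually_ge_nhds ha)))

section Quadrant

variable {ι W : Type*} [AddCommGroup W] [Module ℝ W]

def restrictCoords (Z : Set ι) : ((ι → ℝ) × W) →ₗ[ℝ] (Z → ℝ) :=
  LinearMap.funLeft ℝ ℝ ((↑) : Z → ι) ∘ₗ LinearMap.fst ℝ (ι → ℝ) W

lemma mem_ker_restrictCoords {Z : Set ι} {q : (ι → ℝ) × W} :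
    q ∈ LinearMap.ker (restrictCoords Z) ↔ ∀ i ∈ Z, q.1 i = 0 := by
  simp [restrictCoords, funext_iff]

lemma restrictCoords_surjective (Z : Set ι) :
    Function.Surjective (restrictCoords (W := W) Z) :=
  (LinearMap.funLeft_surjective_of_injective ℝ ℝ _ Subtype.val_injective).comp
    Prod.fst_surjective

lemma twoSidedDirections_quadrant [Finite ι] {p : (ι → ℝ) × W} (hp : ∀ i, 0 ≤ p.1 i) :
    twoSidedDirections {q : (ι → ℝ) × W | ∀ i, 0 ≤ q.1 i} p =
      (LinearMap.ker (restrictCoords (W := W) {i | p.1 i = 0}) : Set ((ι → ℝ) × W)) := by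
  ext q
  simp only [twoSidedDirections, SetLike.mem_coe, mem_ker_restrictCoords, Set.mem_ofPred_eq,
    Prod.fst_add, Prod.fst_sub, Prod.smul_fst, Pi.add_apply, Pi.sub_apply, Pi.smul_apply,
    smul_eq_mul]
  constructor
  · rintro ⟨ε, hε, hplus, hminus⟩ i hi
    have hεq : ε * q.1 i = 0 := by linarith [hplus i, hminus i]
    exact (mul_eq_zero.1 hεq).resolve_left hε.ne'
  · intro h
    obtain ⟨ε, hε, hpos⟩ := ((eventually_all.2 fun i =>
      eventually_nonneg_add_mul_and_sub_mul (hp i) (h i)).and self_mem_nhdsWithin).exists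
    exact ⟨ε, hpos, fun i => (hε i).1, fun i => (hε i).2⟩

lemma ncard_zero_coords_eq_finrank_quotient [Finite ι] {C : Set E} (T : E ≃ₗ[ℝ] (ι → ℝ) × W)
    (hT : T '' C = {p : (ι → ℝ) × W | ∀ i, 0 ≤ p.1 i}) {x : E} (hx : x ∈ C) :
    {i | (T x).1 i = 0}.ncard =
      finrank ℝ (E ⧸ Submodule.span ℝ (twoSidedDirections C x)) := by
  have hTx : T x ∈ {p : (ι → ℝ) × W | ∀ i, 0 ≤ p.1 i} := hT ▸ Set.mem_image_of_mem T hx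
  let f := restrictCoords (W := W) {i | (T x).1 i = 0} ∘ₗ (T : E →ₗ[ℝ] (ι → ℝ) × W)
  have hspan : Submodule.span ℝ (twoSidedDirections C x) = LinearMap.ker f := by
    rw [twoSidedDirections_eq_preimage T, hT, twoSidedDirections_quadrant hTx,
      LinearMap.ker_comp, ← LinearEquiv.coe_coe, ← Submodule.comap_coe, Submodule.span_eq]
  have hf : Function.Surjective f := (restrictCoords_surjective _).comp T.surjective
  have := Fintype.ofFinite {i | (T x).1 i = 0}
  rw [hspan, (f.quotKerEquivOfSurjective hf).finrank_eq, finrank_fintype_fun_eq_card,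
    Fintype.card_eq_nat_card, Nat.card_coe_set_eq]

end Quadrant

end

theorem degeneracy_index_independent_of_sc_isomorphism_general
    {E W W' : Type*} [NormedAddCommGroup E] [NormedSpace ℝ E]
    [NormedAddCommGroup W] [NormedSpace ℝ W]
    [NormedAddCommGroup W'] [NormedSpace ℝ W']
    {k k' : ℕ} (C : Set E)
    (T : E ≃L[ℝ] (Fin k → ℝ) × W) (T' : E ≃L[ℝ] (Fin k' → ℝ) × W')
    (hT : T '' C = {p : (Fin k → ℝ) × W | ∀ i, 0 ≤ p.1 i})
    (hT' : T' '' C = {p : (Fin k' → ℝ) × W' | ∀ i, 0 ≤ p.1 i})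
    (x : E) (hx : x ∈ C) :
    {i : Fin k | (T x).1 i = 0}.ncard = {i : Fin k' | (T' x).1 i = 0}.ncard := by
  exact (ncard_zero_coords_eq_finrank_quotient T.toLinearEquiv hT hx).trans
    (ncard_zero_coords_eq_finrank_quotient T'.toLinearEquiv hT' hx).symm

theorem degeneracy_index_independent_of_sc_isomorphism
    {E W W' : Type*} [NormedAddCommGroup E] [NormedSpace ℝ E]
    [NormedAddCommGroup W] [NormedSpace ℝ W]
    [NormedAddCommGroup W'] [NormedSpace ℝ W']
    {k k' : ℕ} (C : Set E) (hCclosed : IsClosed C) (hCconvex : Convex ℝ C)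
    (T : E ≃L[ℝ] (Fin k → ℝ) × W) (T' : E ≃L[ℝ] (Fin k' → ℝ) × W')
    (hT : T '' C = {p : (Fin k → ℝ) × W | ∀ i, 0 ≤ p.1 i})
    (hT' : T' '' C = {p : (Fin k' → ℝ) × W' | ∀ i, 0 ≤ p.1 i})
    (x : E) (hx : x ∈ C) :
    {i : Fin k | (T x).1 i = 0}.ncard = {i : Fin k' | (T' x).1 i = 0}.ncard :=
  degeneracy_index_independent_of_sc_isomorphism_general C T T' hT hT' x hx
end

section
/- If a section germ (f,0) of a strong local bundle K → O has a filled version (g,0), then for every sc⁺-section s of K → O, the germ (f+s, 0) has the filled version (g + s∘r, 0), where r is the sc-smooth retraction onto O. -/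
/-- `(g,0)` is a filled version of the section germ `(f,0)` of the strong local bundle
`K → O` determined by the strong bundle retraction `R(u,h) = (r u, ρ(u) h)`, with
`O = {y : r y = y}`:
(1) `g = f` on `O` near `0`;
(2) `g(y) = ρ(r y) g(y)` for `y` near `0` forces `y ∈ O`;
(3) the linearization at `0` of `y ↦ (id − ρ(r y)) g(y)`, restricted to `ker Dr(0)`, is an
    isomorphism onto `ker ρ(0)`. -/
def IsFilledVersion {E F : Type*} [NormedAddCommGroup E] [NormedSpace ℝ E]
    [NormedAddCommGroup F] [NormedSpace ℝ F]
    (r : E → E) (ρ : E → F →L[ℝ] F) (f g : E → F) : Prop :=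
  (∀ᶠ y in nhds 0, r y = y → g y = f y) ∧
  (∀ᶠ y in nhds 0, g y = ρ (r y) (g y) → r y = y) ∧
  Set.BijOn (fderiv ℝ (fun y => g y - ρ (r y) (g y)) 0)
    (LinearMap.ker (fderiv ℝ r 0 : E →ₗ[ℝ] E) : Set E) (LinearMap.ker (ρ 0 : F →ₗ[ℝ] F) : Set F)

/-!
STATEMENT 8. If a section germ `(f,0)` of a strong local bundle `K → O` has a filled
version `(g,0)`, then for every sc⁺-section `s` of `K → O` the germ `(f + s, 0)` has the
filled version `(g + s ∘ r, 0)`, where `r` is the sc-smooth retraction onto `O`.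
An sc⁺-section is in particular a smooth section of the bundle, i.e. `ρ(x) s(x) = s(x)`
for `x ∈ O` (the regularity gain in the fiber is not needed for the claim).
-/
theorem filled_version_of_sum_with_scPlus_section
    {E F : Type*} [NormedAddCommGroup E] [NormedSpace ℝ E]
    [NormedAddCommGroup F] [NormedSpace ℝ F]
    (r : E → E) (ρ : E → F →L[ℝ] F) (f g s : E → F)
    (hrr : ∀ y, r (r y) = r y)
    (hρ : ∀ y e, ρ (r y) (ρ (r y) e) = ρ (r y) e)
    (hs_smooth : ContDiff ℝ (⊤ : ℕ∞) s)
    (hs_section : ∀ x, r x = x → ρ x (s x) = s x)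
    (hfill : IsFilledVersion r ρ f g) :
    IsFilledVersion r ρ (fun y => f y + s y) (fun y => g y + s (r y)) := by
  obtain ⟨h1, h2, h3⟩ := hfill
  have key : ∀ y, ρ (r y) (s (r y)) = s (r y) := fun y => hs_section (r y) (hrr y)
  have hfun : (fun y => (g y + s (r y)) - ρ (r y) (g y + s (r y)))
      = fun y => g y - ρ (r y) (g y) := by
    funext y
    simp [map_add, key y]
  refine ⟨?_, ?_, ?_⟩
  · filter_upwards [h1] with y hy hry
    rw [hy hry, hry]
  · filter_upwards [h2] with y hy hgy
    apply hy
    have : g y + s (r y) - ρ (r y) (g y) - s (r y) = 0 := by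
      nth_rewrite 1 [hgy]
      rw [map_add, key y]
      abel
    have heq : g y - ρ (r y) (g y) = 0 := by
      rw [← this]; abel
    exact sub_eq_zero.mp heq
  · rw [hfun]
    exact h3
end

section
/- For every nonzero gluing parameter a with |a| < 1/2, the total gluing map ⊡_a = (⊕_a, ⊖_a): E → E^a_+ ⊕ E^a_− is a linear isomorphism, where E is the space of pairs (h⁺,h⁻) of continuous maps on half-cylinders with matching asymptotic constants, E^a_+ is the space of continuous maps on the glued finite cylinder Z_a, and E^a_− the space of continuous maps on the infinite cylinder C_a with antipodal asymptotic constants. Consequently E decomposes as E = ker(⊕_a) ⊕ ker(⊖_a). -/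
open Filter MeasureTheory

noncomputable section

instance : Fact ((0:ℝ) < 1) := ⟨one_pos⟩

/-- the circle `S¹ = ℝ/ℤ` -/
abbrev S1 := AddCircle (1 : ℝ)

/-- pairs `(h⁺,h⁻)` of maps on the positive and negative half-cylinders with values
in `ℝ^{2n}` -/
abbrev HalfPair (n : ℕ) :=
  ({s : ℝ // 0 ≤ s} × S1 → EuclideanSpace ℝ (Fin (2 * n))) ×
    ({s : ℝ // s ≤ 0} × S1 → EuclideanSpace ℝ (Fin (2 * n)))

/-- evaluation of a map on the positive half-cylinder (clamped at `s = 0`) -/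
def evalP {n : ℕ} (h : {s : ℝ // 0 ≤ s} × S1 → EuclideanSpace ℝ (Fin (2 * n)))
    (s : ℝ) (t : S1) : EuclideanSpace ℝ (Fin (2 * n)) :=
  h (⟨max s 0, le_max_right s 0⟩, t)

/-- evaluation of a map on the negative half-cylinder (clamped at `s = 0`) -/
def evalM {n : ℕ} (h : {s : ℝ // s ≤ 0} × S1 → EuclideanSpace ℝ (Fin (2 * n)))
    (s : ℝ) (t : S1) : EuclideanSpace ℝ (Fin (2 * n)) :=
  h (⟨min s 0, min_le_right s 0⟩, t)

/-- the translated cutoff `β_a(s) = β(s − R/2)` -/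
def betaA (β : ℝ → ℝ) (R s : ℝ) : ℝ := β (s - R / 2)

/-- `γ_a = β_a² + (1 − β_a)²` -/
def gammaA (β : ℝ → ℝ) (R s : ℝ) : ℝ := betaA β R s ^ 2 + (1 - betaA β R s) ^ 2

/-- the average `av_a(h⁺,h⁻) = ½(∫_{S¹} h⁺(R/2,t) dt + ∫_{S¹} h⁻(−R/2,t) dt)` -/
def avA {n : ℕ} (R : ℝ) (h : HalfPair n) : EuclideanSpace ℝ (Fin (2 * n)) :=
  (1 / 2 : ℝ) • ((∫ t : S1, evalP h.1 (R / 2) t) + ∫ t : S1, evalM h.2 (-(R / 2)) t)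

/-- the glued map `⊕_a(h⁺,h⁻)` on the finite cylinder `Z_a = [0,R] × S¹` -/
def oplus {n : ℕ} (β : ℝ → ℝ) (R : ℝ) (θ : S1) (h : HalfPair n)
    (z : {s : ℝ // 0 ≤ s ∧ s ≤ R} × S1) : EuclideanSpace ℝ (Fin (2 * n)) :=
  betaA β R (z.1 : ℝ) • evalP h.1 (z.1 : ℝ) z.2 +
    (1 - betaA β R (z.1 : ℝ)) • evalM h.2 ((z.1 : ℝ) - R) (z.2 - θ)

/-- the anti-glued map `⊖_a(h⁺,h⁻)` on the infinite cylinder `C_a ≅ ℝ × S¹` -/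
def ominus {n : ℕ} (β : ℝ → ℝ) (R : ℝ) (θ : S1) (h : HalfPair n)
    (z : ℝ × S1) : EuclideanSpace ℝ (Fin (2 * n)) :=
  (-(1 - betaA β R z.1)) • (evalP h.1 z.1 z.2 - avA R h) +
    betaA β R z.1 • (evalM h.2 (z.1 - R) (z.2 - θ) - avA R h)

/-- membership in `E`: continuous pairs with matching asymptotic constants (uniformly
in `t`) -/
def memE {n : ℕ} (h : HalfPair n) : Prop :=
  Continuous h.1 ∧ Continuous h.2 ∧
    ∃ c : EuclideanSpace ℝ (Fin (2 * n)),
      TendstoUniformly (fun s t => evalP h.1 s t) (fun _ => c) atTop ∧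
        TendstoUniformly (fun s t => evalM h.2 s t) (fun _ => c) atBot

/-- membership in `E^a_+`: continuous maps on the glued finite cylinder `Z_a` -/
def memEplus {n : ℕ} (R : ℝ)
    (v : {s : ℝ // 0 ≤ s ∧ s ≤ R} × S1 → EuclideanSpace ℝ (Fin (2 * n))) : Prop :=
  Continuous v

/-- membership in `E^a_−`: continuous maps on the infinite cylinder with antipodal
asymptotic constants -/
def memEminus {n : ℕ} (w : ℝ × S1 → EuclideanSpace ℝ (Fin (2 * n))) : Prop :=
  Continuous w ∧
    ∃ c : EuclideanSpace ℝ (Fin (2 * n)),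
      TendstoUniformly (fun s t => w (s, t)) (fun _ => c) atTop ∧
        TendstoUniformly (fun s t => w (s, t)) (fun _ => -c) atBot

/-- a gluing cutoff function: `β(−s) + β(s) = 1`, `β ≡ 1` on `(−∞,−1]`, smooth, and
strictly decreasing on `(−1,1)` -/
def IsGluingCutoff (β : ℝ → ℝ) : Prop :=
  ContDiff ℝ (⊤ : ℕ∞) β ∧ (∀ s, β (-s) + β s = 1) ∧ (∀ s, s ≤ (-1 : ℝ) → β s = 1) ∧
    ∀ s ∈ Set.Ioo (-1 : ℝ) 1, deriv β s < 0

/-!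
STATEMENT 9. For every nonzero gluing parameter `a` with `|a| < 1/2`, the total gluing map
`⊡_a = (⊕_a, ⊖_a) : E → E^a_+ ⊕ E^a_−` is a linear isomorphism, where `E` is the space of
pairs `(h⁺,h⁻)` of continuous maps on the half-cylinders with matching asymptotic
constants, `E^a_+` the space of continuous maps on the glued finite cylinder `Z_a`, and
`E^a_−` the space of continuous maps on the infinite cylinder `C_a` with antipodal
asymptotic constants.  Consequently `E = ker ⊕_a ⊕ ker ⊖_a`.  Here `R = φ(|a|)` with the
exponential gluing profile `φ(r) = e^{1/r} − e` and `a = |a| e^{−2πiϑ}`.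
-/
section Helpers

namespace TG

/-! ### Uniform convergence helpers -/

theorem tu_const {α β ι : Type*} [UniformSpace β] {f : α → β} {p : Filter ι} :
    TendstoUniformly (fun _ => f) f p :=
  fun _u hu => Filter.Eventually.of_forall fun _ x => refl_mem_uniformity hu

theorem tu_congr {α β ι : Type*} [UniformSpace β] {F G : ι → α → β} {f : α → β}
    {p : Filter ι} (h : TendstoUniformly F f p)
    (hFG : ∀ᶠ i in p, ∀ x, F i x = G i x) : TendstoUniformly G f p := by
  intro u hu
  filter_upwards [h u hu, hFG] with i h1 h2 x
  rw [← h2 x]; exact h1 x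

theorem tu_comp_index {α β ι κ : Type*} [UniformSpace β] {F : ι → α → β} {f : α → β}
    {p : Filter ι} {q : Filter κ} {g : κ → ι} (h : TendstoUniformly F f p)
    (hg : Filter.Tendsto g q p) : TendstoUniformly (fun k => F (g k)) f q :=
  fun u hu => hg.eventually (h u hu)

/-! ### Cutoff facts -/

variable {β : ℝ → ℝ}

theorem cutoff_continuous (hβ : IsGluingCutoff β) : Continuous β := hβ.1.continuous

theorem cutoff_one (hβ : IsGluingCutoff β) {s : ℝ} (hs : s ≤ -1) : β s = 1 := hβ.2.2.1 s hs

theorem cutoff_zero (hβ : IsGluingCutoff β) {s : ℝ} (hs : 1 ≤ s) : β s = 0 := by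
  have h1 := hβ.2.1 s
  have h2 : β (-s) = 1 := hβ.2.2.1 (-s) (by linarith)
  linarith

theorem cutoff_half (hβ : IsGluingCutoff β) : β 0 = 1 / 2 := by
  have := hβ.2.1 0
  rw [neg_zero] at this
  linarith

variable {R : ℝ}

theorem betaA_one (hβ : IsGluingCutoff β) (hR2 : 2 ≤ R) {s : ℝ} (hs : s ≤ 0) :
    betaA β R s = 1 := cutoff_one hβ (by linarith)

theorem betaA_zero (hβ : IsGluingCutoff β) (hR2 : 2 ≤ R) {s : ℝ} (hs : R ≤ s) :
    betaA β R s = 0 := cutoff_zero hβ (by linarith)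

theorem betaA_one' (hβ : IsGluingCutoff β) {s : ℝ} (hs : s - R / 2 ≤ -1) :
    betaA β R s = 1 := cutoff_one hβ hs

theorem betaA_zero' (hβ : IsGluingCutoff β) {s : ℝ} (hs : 1 ≤ s - R / 2) :
    betaA β R s = 0 := cutoff_zero hβ hs

theorem betaA_half (hβ : IsGluingCutoff β) : betaA β R (R / 2) = 1 / 2 := by
  unfold betaA; rw [sub_self]; exact cutoff_half hβ

theorem gammaA_eq (s : ℝ) : gammaA β R s = betaA β R s ^ 2 + (1 - betaA β R s) ^ 2 := rfl

theorem gammaA_pos (s : ℝ) : 0 < gammaA β R s := by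
  have h := sq_nonneg (2 * betaA β R s - 1)
  unfold gammaA
  nlinarith

theorem gammaA_ne (s : ℝ) : gammaA β R s ≠ 0 := (gammaA_pos s).ne'

theorem continuous_betaA (hβ : IsGluingCutoff β) : Continuous (betaA β R) :=
  (cutoff_continuous hβ).comp (continuous_id.sub continuous_const)

theorem continuous_gammaA (hβ : IsGluingCutoff β) : Continuous (gammaA β R) := by
  have h := continuous_betaA (R := R) hβ
  unfold gammaA
  continuity

end TG

end Helpers
namespace TG

/-! ### Linear algebra of the 2×2 system -/

section Alg

variable {M : Type*} [AddCommGroup M] [Module ℝ M]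

theorem solve_u (b : ℝ) (hγ : b ^ 2 + (1 - b) ^ 2 ≠ 0) (u w : M) :
    b • ((b ^ 2 + (1 - b) ^ 2)⁻¹ • (b • u - (1 - b) • w)) +
      (1 - b) • ((b ^ 2 + (1 - b) ^ 2)⁻¹ • ((1 - b) • u + b • w)) = u := by
  rw [smul_comm b, smul_comm (1 - b), ← smul_add]
  have h : b • (b • u - (1 - b) • w) + (1 - b) • ((1 - b) • u + b • w)
      = (b ^ 2 + (1 - b) ^ 2) • u := by module
  rw [h, smul_smul, inv_mul_cancel₀ hγ, one_smul]

theorem solve_w (b : ℝ) (hγ : b ^ 2 + (1 - b) ^ 2 ≠ 0) (u w : M) :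
    (-(1 - b)) • ((b ^ 2 + (1 - b) ^ 2)⁻¹ • (b • u - (1 - b) • w)) +
      b • ((b ^ 2 + (1 - b) ^ 2)⁻¹ • ((1 - b) • u + b • w)) = w := by
  rw [smul_comm (-(1 - b)), smul_comm b, ← smul_add]
  have h : (-(1 - b)) • (b • u - (1 - b) • w) + b • ((1 - b) • u + b • w)
      = (b ^ 2 + (1 - b) ^ 2) • w := by module
  rw [h, smul_smul, inv_mul_cancel₀ hγ, one_smul]

variable [NoZeroSMulDivisors ℝ M]

theorem solve_inj (b : ℝ) (hγ : b ^ 2 + (1 - b) ^ 2 ≠ 0) {p m p' m' A : M}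
    (h1 : b • p + (1 - b) • m = b • p' + (1 - b) • m')
    (h2 : (-(1 - b)) • (p - A) + b • (m - A) = (-(1 - b)) • (p' - A) + b • (m' - A)) :
    p = p' ∧ m = m' := by
  constructor
  · refine smul_right_injective M hγ ?_
    calc (b ^ 2 + (1 - b) ^ 2) • p
        = b • (b • p + (1 - b) • m)
          - (1 - b) • ((-(1 - b)) • (p - A) + b • (m - A))
          + ((1 - b) ^ 2 - b * (1 - b)) • A := by module
      _ = b • (b • p' + (1 - b) • m')
          - (1 - b) • ((-(1 - b)) • (p' - A) + b • (m' - A))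
          + ((1 - b) ^ 2 - b * (1 - b)) • A := by rw [h1, h2]
      _ = (b ^ 2 + (1 - b) ^ 2) • p' := by module
  · refine smul_right_injective M hγ ?_
    calc (b ^ 2 + (1 - b) ^ 2) • m
        = (1 - b) • (b • p + (1 - b) • m)
          + b • ((-(1 - b)) • (p - A) + b • (m - A))
          + (b ^ 2 - b * (1 - b)) • A := by module
      _ = (1 - b) • (b • p' + (1 - b) • m')
          + b • ((-(1 - b)) • (p' - A) + b • (m' - A))
          + (b ^ 2 - b * (1 - b)) • A := by rw [h1, h2]
      _ = (b ^ 2 + (1 - b) ^ 2) • m' := by module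

end Alg

/-! ### Integration on `S1` -/

section Int

variable {E : Type*} [NormedAddCommGroup E] [NormedSpace ℝ E]

theorem integrable_S1 {f : S1 → E} (hf : Continuous f) : Integrable f :=
  hf.integrable_of_hasCompactSupport (HasCompactSupport.of_compactSpace f)

theorem integral_S1_const [CompleteSpace E] (c : E) : (∫ _ : S1, c) = c := by
  rw [integral_const]; simp [Measure.real, AddCircle.measure_univ]

end Int

/-! ### The inverse construction -/

section Inv

variable {n : ℕ} (β : ℝ → ℝ) {R : ℝ}

/-- clamped evaluation of a map on the finite cylinder -/
def evalZ (hR : 0 ≤ R) (v : {s : ℝ // 0 ≤ s ∧ s ≤ R} × S1 → EuclideanSpace ℝ (Fin (2 * n)))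
    (s : ℝ) (t : S1) : EuclideanSpace ℝ (Fin (2 * n)) :=
  v (⟨max (min s R) 0, le_max_right _ _, max_le (min_le_right s R) hR⟩, t)

theorem evalZ_eq (hR : 0 ≤ R) (v : {s : ℝ // 0 ≤ s ∧ s ≤ R} × S1 → EuclideanSpace ℝ (Fin (2 * n)))
    {s : ℝ} (hs : 0 ≤ s) (hsR : s ≤ R) (t : S1) :
    evalZ hR v s t = v (⟨s, hs, hsR⟩, t) := by
  have hmax : max (min s R) 0 = s := by rw [min_eq_left hsR, max_eq_left hs]
  unfold evalZ
  exact congrArg (fun x => v (x, t)) (Subtype.ext hmax)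

theorem continuous_evalZ (hR : 0 ≤ R)
    {v : {s : ℝ // 0 ≤ s ∧ s ≤ R} × S1 → EuclideanSpace ℝ (Fin (2 * n))}
    (hv : Continuous v) : Continuous fun z : ℝ × S1 => evalZ hR v z.1 z.2 :=
  hv.comp ((((continuous_fst.min continuous_const).max continuous_const).subtype_mk _).prodMk
    continuous_snd)

/-- the solved `p`-component -/
def pF (hR : 0 ≤ R) (v : {s : ℝ // 0 ≤ s ∧ s ≤ R} × S1 → EuclideanSpace ℝ (Fin (2 * n)))
    (w : ℝ × S1 → EuclideanSpace ℝ (Fin (2 * n))) (A : EuclideanSpace ℝ (Fin (2 * n)))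
    (s : ℝ) (t : S1) : EuclideanSpace ℝ (Fin (2 * n)) :=
  (gammaA β R s)⁻¹ • (betaA β R s • evalZ hR v s t -
    (1 - betaA β R s) • (w (s, t) - (1 - 2 * betaA β R s) • A))

/-- the solved `m`-component -/
def mF (hR : 0 ≤ R) (v : {s : ℝ // 0 ≤ s ∧ s ≤ R} × S1 → EuclideanSpace ℝ (Fin (2 * n)))
    (w : ℝ × S1 → EuclideanSpace ℝ (Fin (2 * n))) (A : EuclideanSpace ℝ (Fin (2 * n)))
    (s : ℝ) (t : S1) : EuclideanSpace ℝ (Fin (2 * n)) :=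
  (gammaA β R s)⁻¹ • ((1 - betaA β R s) • evalZ hR v s t +
    betaA β R s • (w (s, t) - (1 - 2 * betaA β R s) • A))

variable {hR : 0 ≤ R} {v : {s : ℝ // 0 ≤ s ∧ s ≤ R} × S1 → EuclideanSpace ℝ (Fin (2 * n))}
  {w : ℝ × S1 → EuclideanSpace ℝ (Fin (2 * n))} {A : EuclideanSpace ℝ (Fin (2 * n))}

theorem pF_of_beta_zero {s : ℝ} (hb : betaA β R s = 0) (t : S1) :
    pF β hR v w A s t = A - w (s, t) := by
  unfold pF gammaA
  rw [hb]
  norm_num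

theorem mF_of_beta_one {s : ℝ} (hb : betaA β R s = 1) (t : S1) :
    mF β hR v w A s t = w (s, t) + A := by
  unfold mF gammaA
  rw [hb]
  norm_num
  try module

theorem pF_half (hβ : IsGluingCutoff β) (t : S1) :
    pF β hR v w A (R / 2) t = evalZ hR v (R / 2) t - w (R / 2, t) := by
  unfold pF gammaA
  rw [betaA_half hβ]
  norm_num
  try module

theorem mF_half (hβ : IsGluingCutoff β) (t : S1) :
    mF β hR v w A (R / 2) t = evalZ hR v (R / 2) t + w (R / 2, t) := by
  unfold mF gammaA
  rw [betaA_half hβ]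
  norm_num
  try module

theorem continuous_pF (hβ : IsGluingCutoff β) (hv : Continuous v) (hw : Continuous w) :
    Continuous fun z : ℝ × S1 => pF β hR v w A z.1 z.2 := by
  have h1 : Continuous fun z : ℝ × S1 => betaA β R z.1 :=
    (continuous_betaA hβ).comp continuous_fst
  have h2 : Continuous fun z : ℝ × S1 => (gammaA β R z.1)⁻¹ :=
    ((continuous_gammaA hβ).comp continuous_fst).inv₀ fun z => gammaA_ne _
  have h3 := continuous_evalZ hR hv
  unfold pF
  fun_prop

theorem continuous_mF (hβ : IsGluingCutoff β) (hv : Continuous v) (hw : Continuous w) :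
    Continuous fun z : ℝ × S1 => mF β hR v w A z.1 z.2 := by
  have h1 : Continuous fun z : ℝ × S1 => betaA β R z.1 :=
    (continuous_betaA hβ).comp continuous_fst
  have h2 : Continuous fun z : ℝ × S1 => (gammaA β R z.1)⁻¹ :=
    ((continuous_gammaA hβ).comp continuous_fst).inv₀ fun z => gammaA_ne _
  have h3 := continuous_evalZ hR hv
  unfold mF
  fun_prop

end Inv

end TG
namespace TG

section Main

variable {n : ℕ} {β : ℝ → ℝ} {R : ℝ} {θ : S1}

/-! ### eval basics -/

theorem evalP_eq {h1 : {s : ℝ // 0 ≤ s} × S1 → EuclideanSpace ℝ (Fin (2 * n))}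
    {s : ℝ} (hs : 0 ≤ s) (t : S1) : evalP h1 s t = h1 (⟨s, hs⟩, t) :=
  congrArg (fun x => h1 (x, t)) (Subtype.ext (max_eq_left hs))

theorem evalM_eq {h2 : {s : ℝ // s ≤ 0} × S1 → EuclideanSpace ℝ (Fin (2 * n))}
    {s : ℝ} (hs : s ≤ 0) (t : S1) : evalM h2 s t = h2 (⟨s, hs⟩, t) :=
  congrArg (fun x => h2 (x, t)) (Subtype.ext (min_eq_left hs))

theorem continuous_evalP {h1 : {s : ℝ // 0 ≤ s} × S1 → EuclideanSpace ℝ (Fin (2 * n))}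
    (hc : Continuous h1) : Continuous fun z : ℝ × S1 => evalP h1 z.1 z.2 :=
  hc.comp (((continuous_fst.max continuous_const).subtype_mk _).prodMk continuous_snd)

theorem continuous_evalM {h2 : {s : ℝ // s ≤ 0} × S1 → EuclideanSpace ℝ (Fin (2 * n))}
    (hc : Continuous h2) : Continuous fun z : ℝ × S1 => evalM h2 z.1 z.2 :=
  hc.comp (((continuous_fst.min continuous_const).subtype_mk _).prodMk continuous_snd)

theorem integrable_evalP {h1 : {s : ℝ // 0 ≤ s} × S1 → EuclideanSpace ℝ (Fin (2 * n))}
    (hc : Continuous h1) (s : ℝ) : Integrable fun t : S1 => evalP h1 s t :=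
  integrable_S1 ((continuous_evalP hc).comp (continuous_const.prodMk continuous_id))

theorem integrable_evalM {h2 : {s : ℝ // s ≤ 0} × S1 → EuclideanSpace ℝ (Fin (2 * n))}
    (hc : Continuous h2) (s : ℝ) : Integrable fun t : S1 => evalM h2 s t :=
  integrable_S1 ((continuous_evalM hc).comp (continuous_const.prodMk continuous_id))

theorem evalP_add (f g : {s : ℝ // 0 ≤ s} × S1 → EuclideanSpace ℝ (Fin (2 * n)))
    (s : ℝ) (t : S1) : evalP (f + g) s t = evalP f s t + evalP g s t := rfl

theorem evalM_add (f g : {s : ℝ // s ≤ 0} × S1 → EuclideanSpace ℝ (Fin (2 * n)))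
    (s : ℝ) (t : S1) : evalM (f + g) s t = evalM f s t + evalM g s t := rfl

theorem evalP_smul (c : ℝ) (f : {s : ℝ // 0 ≤ s} × S1 → EuclideanSpace ℝ (Fin (2 * n)))
    (s : ℝ) (t : S1) : evalP (c • f) s t = c • evalP f s t := rfl

theorem evalM_smul (c : ℝ) (f : {s : ℝ // s ≤ 0} × S1 → EuclideanSpace ℝ (Fin (2 * n)))
    (s : ℝ) (t : S1) : evalM (c • f) s t = c • evalM f s t := rfl

/-! ### linearity -/

theorem avA_add {h h' : HalfPair n} (hc1 : Continuous h.1) (hc2 : Continuous h.2)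
    (hc1' : Continuous h'.1) (hc2' : Continuous h'.2) :
    avA R (h + h') = avA R h + avA R h' := by
  unfold avA
  have e1 : (∫ t : S1, evalP (h + h').1 (R / 2) t)
      = (∫ t : S1, evalP h.1 (R / 2) t) + ∫ t : S1, evalP h'.1 (R / 2) t := by
    rw [← integral_add (integrable_evalP hc1 _) (integrable_evalP hc1' _)]
    rfl
  have e2 : (∫ t : S1, evalM (h + h').2 (-(R / 2)) t)
      = (∫ t : S1, evalM h.2 (-(R / 2)) t) + ∫ t : S1, evalM h'.2 (-(R / 2)) t := by
    rw [← integral_add (integrable_evalM hc2 _) (integrable_evalM hc2' _)]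
    rfl
  rw [e1, e2]
  module

theorem avA_smul {h : HalfPair n} (c : ℝ) :
    avA R (c • h) = c • avA R h := by
  unfold avA
  have e1 : (∫ t : S1, evalP (c • h).1 (R / 2) t) = c • ∫ t : S1, evalP h.1 (R / 2) t := by
    rw [← integral_smul]; rfl
  have e2 : (∫ t : S1, evalM (c • h).2 (-(R / 2)) t) = c • ∫ t : S1, evalM h.2 (-(R / 2)) t := by
    rw [← integral_smul]; rfl
  rw [e1, e2]
  module

theorem oplus_add (h h' : HalfPair n) (z : {s : ℝ // 0 ≤ s ∧ s ≤ R} × S1) :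
    oplus β R θ (h + h') z = oplus β R θ h z + oplus β R θ h' z := by
  unfold oplus
  rw [show (h + h').1 = h.1 + h'.1 from rfl, show (h + h').2 = h.2 + h'.2 from rfl,
    evalP_add, evalM_add]
  module

theorem oplus_smul (c : ℝ) (h : HalfPair n) (z : {s : ℝ // 0 ≤ s ∧ s ≤ R} × S1) :
    oplus β R θ (c • h) z = c • oplus β R θ h z := by
  unfold oplus
  rw [show (c • h).1 = c • h.1 from rfl, show (c • h).2 = c • h.2 from rfl,
    evalP_smul, evalM_smul]
  module

theorem ominus_add {h h' : HalfPair n} (hc1 : Continuous h.1) (hc2 : Continuous h.2)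
    (hc1' : Continuous h'.1) (hc2' : Continuous h'.2) (z : ℝ × S1) :
    ominus β R θ (h + h') z = ominus β R θ h z + ominus β R θ h' z := by
  unfold ominus
  rw [avA_add hc1 hc2 hc1' hc2',
    show (h + h').1 = h.1 + h'.1 from rfl, show (h + h').2 = h.2 + h'.2 from rfl,
    evalP_add, evalM_add]
  module

theorem ominus_smul (c : ℝ) (h : HalfPair n) (z : ℝ × S1) :
    ominus β R θ (c • h) z = c • ominus β R θ h z := by
  unfold ominus
  rw [avA_smul c,
    show (c • h).1 = c • h.1 from rfl, show (c • h).2 = c • h.2 from rfl,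
    evalP_smul, evalM_smul]
  module

theorem memE_add {h h' : HalfPair n} (hh : memE h) (hh' : memE h') : memE (h + h') := by
  obtain ⟨hc1, hc2, c, hct, hcb⟩ := hh
  obtain ⟨hc1', hc2', c', hct', hcb'⟩ := hh'
  refine ⟨hc1.add hc1', hc2.add hc2', c + c', ?_, ?_⟩
  · exact tu_congr (hct.add hct') (Filter.Eventually.of_forall fun s t => rfl)
  · exact tu_congr (hcb.add hcb') (Filter.Eventually.of_forall fun s t => rfl)

end Main

end TG
namespace TG

section Main2

variable {n : ℕ} {β : ℝ → ℝ} {R : ℝ} {θ : S1}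

/-! ### continuity of the gluing maps -/

theorem continuous_oplus (hβ : IsGluingCutoff β) {h : HalfPair n}
    (hc1 : Continuous h.1) (hc2 : Continuous h.2) : Continuous (oplus β R θ h) := by
  have hb : Continuous fun z : {s : ℝ // 0 ≤ s ∧ s ≤ R} × S1 => betaA β R (z.1 : ℝ) :=
    (continuous_betaA hβ).comp (continuous_subtype_val.comp continuous_fst)
  have hp : Continuous fun z : {s : ℝ // 0 ≤ s ∧ s ≤ R} × S1 => evalP h.1 (z.1 : ℝ) z.2 :=
    (continuous_evalP hc1).comp
      ((continuous_subtype_val.comp continuous_fst).prodMk continuous_snd)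
  have hm : Continuous fun z : {s : ℝ // 0 ≤ s ∧ s ≤ R} × S1 =>
      evalM h.2 ((z.1 : ℝ) - R) (z.2 - θ) :=
    (continuous_evalM hc2).comp
      (((continuous_subtype_val.comp continuous_fst).sub continuous_const).prodMk
        (continuous_snd.sub continuous_const))
  unfold oplus
  fun_prop

theorem continuous_ominus (hβ : IsGluingCutoff β) {h : HalfPair n}
    (hc1 : Continuous h.1) (hc2 : Continuous h.2) : Continuous (ominus β R θ h) := by
  have hb : Continuous fun z : ℝ × S1 => betaA β R z.1 :=
    (continuous_betaA hβ).comp continuous_fst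
  have hp : Continuous fun z : ℝ × S1 => evalP h.1 z.1 z.2 := continuous_evalP hc1
  have hm : Continuous fun z : ℝ × S1 => evalM h.2 (z.1 - R) (z.2 - θ) :=
    (continuous_evalM hc2).comp
      ((continuous_fst.sub continuous_const).prodMk (continuous_snd.sub continuous_const))
  unfold ominus
  fun_prop

/-! ### the average as an integral of `⊕` -/

theorem integral_oplus_half (hβ : IsGluingCutoff β) (hR2 : 2 ≤ R) {h : HalfPair n}
    (hc1 : Continuous h.1) (hc2 : Continuous h.2) :
    avA R h = ∫ t : S1, oplus β R θ h (⟨R / 2, by constructor <;> linarith⟩, t) := by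
  have e : (fun t : S1 => oplus β R θ h (⟨R / 2, by constructor <;> linarith⟩, t))
      = fun t : S1 => (1 / 2 : ℝ) • evalP h.1 (R / 2) t
          + (1 / 2 : ℝ) • evalM h.2 (-(R / 2)) (t - θ) := by
    funext t
    show betaA β R (R / 2) • evalP h.1 (R / 2) t
        + (1 - betaA β R (R / 2)) • evalM h.2 (R / 2 - R) (t - θ) = _
    rw [betaA_half hβ, show R / 2 - R = -(R / 2) by ring]
    norm_num
  have i1 : Integrable fun t : S1 => (1 / 2 : ℝ) • evalP h.1 (R / 2) t :=
    Integrable.fun_smul (1 / 2 : ℝ) (integrable_evalP hc1 (R / 2))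
  have i2 : Integrable fun t : S1 => (1 / 2 : ℝ) • evalM h.2 (-(R / 2)) (t - θ) :=
    Integrable.fun_smul (1 / 2 : ℝ) (integrable_S1 ((continuous_evalM hc2).comp
      (continuous_const.prodMk (continuous_id.sub continuous_const))))
  rw [e, integral_add i1 i2, integral_smul, integral_smul,
    integral_sub_right_eq_self (fun t => evalM h.2 (-(R / 2)) t) θ]
  unfold avA
  module

/-! ### the anti-glued map has antipodal asymptotics -/

theorem memEminus_ominus (hβ : IsGluingCutoff β) (hR2 : 2 ≤ R) {h : HalfPair n}
    (hh : memE h) : memEminus (ominus β R θ h) := by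
  obtain ⟨hc1, hc2, c, hct, hcb⟩ := hh
  refine ⟨continuous_ominus hβ hc1 hc2, avA R h - c, ?_, ?_⟩
  · have base : TendstoUniformly (fun (s : ℝ) (t : S1) => avA R h - evalP h.1 s t)
        (fun _ => avA R h - c) atTop := tu_const.sub hct
    refine tu_congr base ?_
    filter_upwards [Filter.eventually_ge_atTop (R / 2 + 1)] with s hs t
    have hb : betaA β R s = 0 := betaA_zero' hβ (by linarith)
    show _ = (-(1 - betaA β R s)) • (evalP h.1 s t - avA R h)
        + betaA β R s • (evalM h.2 (s - R) (t - θ) - avA R h)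
    rw [hb]
    module
  · have hgb : Filter.Tendsto (fun s : ℝ => s - R) atBot atBot := by
      simpa [sub_eq_add_neg] using
        tendsto_atBot_add_const_right atBot (-R) (Filter.tendsto_id (α := ℝ))
    have base1 : TendstoUniformly (fun (s : ℝ) (t : S1) => evalM h.2 (s - R) (t - θ))
        (fun _ => c) atBot := (tu_comp_index hcb hgb).comp fun t : S1 => t - θ
    have base : TendstoUniformly
        (fun (s : ℝ) (t : S1) => evalM h.2 (s - R) (t - θ) - avA R h)
        (fun _ => c - avA R h) atBot := base1.sub tu_const
    have hfun : (fun _ : S1 => c - avA R h) = fun _ : S1 => -(avA R h - c) := by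
      funext _; rw [neg_sub]
    rw [hfun] at base
    refine tu_congr base ?_
    filter_upwards [Filter.eventually_le_atBot (R / 2 - 1)] with s hs t
    have hb : betaA β R s = 1 := betaA_one' hβ (by linarith)
    show _ = (-(1 - betaA β R s)) • (evalP h.1 s t - avA R h)
        + betaA β R s • (evalM h.2 (s - R) (t - θ) - avA R h)
    rw [hb]
    module

/-! ### injectivity -/

theorem gammaA_ne' (s : ℝ) : betaA β R s ^ 2 + (1 - betaA β R s) ^ 2 ≠ 0 := gammaA_ne s

theorem inj_aux (hβ : IsGluingCutoff β) (hR2 : 2 ≤ R) {h h' : HalfPair n}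
    (hh : memE h) (hh' : memE h')
    (ho : oplus β R θ h = oplus β R θ h') (hm : ominus β R θ h = ominus β R θ h') :
    h = h' := by
  have hav : avA R h = avA R h' := by
    rw [integral_oplus_half (θ := θ) hβ hR2 hh.1 hh.2.1,
      integral_oplus_half (θ := θ) hβ hR2 hh'.1 hh'.2.1, ho]
  have h1 : h.1 = h'.1 := by
    funext z
    obtain ⟨⟨s, hs⟩, t⟩ := z
    rw [← evalP_eq (h1 := h.1) hs t, ← evalP_eq (h1 := h'.1) hs t]
    by_cases hsR : s ≤ R
    · have e1 : betaA β R s • evalP h.1 s t + (1 - betaA β R s) • evalM h.2 (s - R) (t - θ)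
          = betaA β R s • evalP h'.1 s t
            + (1 - betaA β R s) • evalM h'.2 (s - R) (t - θ) :=
        congrFun ho (⟨s, hs, hsR⟩, t)
      have e2 : (-(1 - betaA β R s)) • (evalP h.1 s t - avA R h)
            + betaA β R s • (evalM h.2 (s - R) (t - θ) - avA R h)
          = (-(1 - betaA β R s)) • (evalP h'.1 s t - avA R h')
            + betaA β R s • (evalM h'.2 (s - R) (t - θ) - avA R h') := congrFun hm (s, t)
      rw [← hav] at e2
      exact (solve_inj (betaA β R s) (gammaA_ne' s) e1 e2).1
    · push_neg at hsR
      have hb : betaA β R s = 0 := betaA_zero hβ hR2 hsR.le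
      have e2 : (-(1 - betaA β R s)) • (evalP h.1 s t - avA R h)
            + betaA β R s • (evalM h.2 (s - R) (t - θ) - avA R h)
          = (-(1 - betaA β R s)) • (evalP h'.1 s t - avA R h')
            + betaA β R s • (evalM h'.2 (s - R) (t - θ) - avA R h') := congrFun hm (s, t)
      rw [← hav, hb] at e2
      simpa using e2
  have h2 : h.2 = h'.2 := by
    funext z
    obtain ⟨⟨σ, hσ⟩, τ⟩ := z
    rw [← evalM_eq (h2 := h.2) hσ τ, ← evalM_eq (h2 := h'.2) hσ τ]
    by_cases hσR : -R ≤ σ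
    · have e1 : betaA β R (σ + R) • evalP h.1 (σ + R) (τ + θ)
            + (1 - betaA β R (σ + R)) • evalM h.2 (σ + R - R) (τ + θ - θ)
          = betaA β R (σ + R) • evalP h'.1 (σ + R) (τ + θ)
            + (1 - betaA β R (σ + R)) • evalM h'.2 (σ + R - R) (τ + θ - θ) :=
        congrFun ho (⟨σ + R, by constructor <;> linarith⟩, τ + θ)
      have e2 : (-(1 - betaA β R (σ + R))) • (evalP h.1 (σ + R) (τ + θ) - avA R h)
            + betaA β R (σ + R) • (evalM h.2 (σ + R - R) (τ + θ - θ) - avA R h)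
          = (-(1 - betaA β R (σ + R))) • (evalP h'.1 (σ + R) (τ + θ) - avA R h')
            + betaA β R (σ + R) • (evalM h'.2 (σ + R - R) (τ + θ - θ) - avA R h') :=
        congrFun hm (σ + R, τ + θ)
      rw [← hav] at e2
      rw [show σ + R - R = σ by ring, add_sub_cancel_right] at e1 e2
      exact (solve_inj (betaA β R (σ + R)) (gammaA_ne' (σ + R)) e1 e2).2
    · push_neg at hσR
      have hb : betaA β R (σ + R) = 1 := betaA_one hβ hR2 (by linarith)
      have e2 : (-(1 - betaA β R (σ + R))) • (evalP h.1 (σ + R) (τ + θ) - avA R h)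
            + betaA β R (σ + R) • (evalM h.2 (σ + R - R) (τ + θ - θ) - avA R h)
          = (-(1 - betaA β R (σ + R))) • (evalP h'.1 (σ + R) (τ + θ) - avA R h')
            + betaA β R (σ + R) • (evalM h'.2 (σ + R - R) (τ + θ - θ) - avA R h') :=
        congrFun hm (σ + R, τ + θ)
      rw [← hav, hb] at e2
      rw [show σ + R - R = σ by ring, add_sub_cancel_right] at e2
      simpa using e2
  exact Prod.ext h1 h2

end Main2

end TG
namespace TG

section Surj

variable {n : ℕ} {β : ℝ → ℝ} {R : ℝ} {θ : S1}

theorem surj_aux (hβ : IsGluingCutoff β) (hR2 : 2 ≤ R)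
    {v : {s : ℝ // 0 ≤ s ∧ s ≤ R} × S1 → EuclideanSpace ℝ (Fin (2 * n))}
    {w : ℝ × S1 → EuclideanSpace ℝ (Fin (2 * n))}
    (hv : memEplus R v) (hw : memEminus w) :
    ∃ h : HalfPair n, memE h ∧ oplus β R θ h = v ∧ ominus β R θ h = w := by
  have hR0 : (0 : ℝ) ≤ R := by linarith
  have hvc : Continuous v := hv
  obtain ⟨hwc, cw, hwt, hwb⟩ := hw
  set A : EuclideanSpace ℝ (Fin (2 * n)) := ∫ t : S1, evalZ hR0 v (R / 2) t with hA
  set p1 : {s : ℝ // 0 ≤ s} × S1 → EuclideanSpace ℝ (Fin (2 * n)) :=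
    fun z => pF β hR0 v w A (z.1 : ℝ) z.2 with hp1
  set p2 : {s : ℝ // s ≤ 0} × S1 → EuclideanSpace ℝ (Fin (2 * n)) :=
    fun z => mF β hR0 v w A ((z.1 : ℝ) + R) (z.2 + θ) with hp2
  have ep : ∀ (s : ℝ) (t : S1), evalP p1 s t = pF β hR0 v w A (max s 0) t := fun _ _ => rfl
  have em : ∀ (s : ℝ) (t : S1), evalM p2 s t = mF β hR0 v w A (min s 0 + R) (t + θ) :=
    fun _ _ => rfl
  -- the average of the constructed pair is `A`
  have hAv : avA R (p1, p2) = A := by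
    have e1 : (fun t : S1 => evalP (p1, p2).1 (R / 2) t)
        = fun t => evalZ hR0 v (R / 2) t - w (R / 2, t) := by
      funext t
      show evalP p1 (R / 2) t = _
      rw [ep, max_eq_left (by linarith), pF_half β hβ]
    have e2 : (fun t : S1 => evalM (p1, p2).2 (-(R / 2)) t)
        = fun t => evalZ hR0 v (R / 2) (t + θ) + w (R / 2, t + θ) := by
      funext t
      show evalM p2 (-(R / 2)) t = _
      rw [em, min_eq_left (by linarith), show -(R / 2) + R = R / 2 by ring, mF_half β hβ]
    have iu : Integrable fun t : S1 => evalZ hR0 v (R / 2) t :=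
      integrable_S1 ((continuous_evalZ hR0 hvc).comp (continuous_const.prodMk continuous_id))
    have iw : Integrable fun t : S1 => w (R / 2, t) :=
      integrable_S1 (hwc.comp (continuous_const.prodMk continuous_id))
    have iu' : Integrable fun t : S1 => evalZ hR0 v (R / 2) (t + θ) :=
      integrable_S1 ((continuous_evalZ hR0 hvc).comp
        (continuous_const.prodMk (continuous_id.add continuous_const)))
    have iw' : Integrable fun t : S1 => w (R / 2, t + θ) :=
      integrable_S1 (hwc.comp (continuous_const.prodMk (continuous_id.add continuous_const)))
    unfold avA
    rw [e1, e2, integral_sub iu iw, integral_add iu' iw',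
      integral_add_right_eq_self (fun t : S1 => evalZ hR0 v (R / 2) t) θ,
      integral_add_right_eq_self (fun t : S1 => w (R / 2, t)) θ, ← hA]
    module
  refine ⟨(p1, p2), ⟨?_, ?_, A - cw, ?_, ?_⟩, ?_, ?_⟩
  · -- continuity of p1
    exact (continuous_pF β hβ hvc hwc).comp
      ((continuous_subtype_val.comp continuous_fst).prodMk continuous_snd)
  · -- continuity of p2
    exact (continuous_mF β hβ hvc hwc).comp
      (((continuous_subtype_val.comp continuous_fst).add continuous_const).prodMk
        (continuous_snd.add continuous_const))
  · -- asymptotics at +∞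
    have base : TendstoUniformly (fun (s : ℝ) (t : S1) => A - w (s, t))
        (fun _ : S1 => A - cw) atTop := tu_const.sub hwt
    refine tu_congr base ?_
    filter_upwards [Filter.eventually_ge_atTop (R / 2 + 1)] with s hs t
    have h0 : (0 : ℝ) ≤ s := by linarith
    rw [ep, max_eq_left h0, pF_of_beta_zero β (betaA_zero' hβ (by linarith))]
  · -- asymptotics at −∞
    have hgb : Filter.Tendsto (fun s : ℝ => s + R) atBot atBot :=
      tendsto_atBot_add_const_right atBot R (Filter.tendsto_id (α := ℝ))
    have base : TendstoUniformly (fun (s : ℝ) (t : S1) => w (s + R, t + θ) + A)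
        (fun _ : S1 => -cw + A) atBot :=
      ((tu_comp_index hwb hgb).comp fun t : S1 => t + θ).add tu_const
    have hrw : (fun _ : S1 => -cw + A) = fun _ : S1 => A - cw := by funext _; abel
    rw [hrw] at base
    refine tu_congr base ?_
    filter_upwards [Filter.eventually_le_atBot (-(R / 2) - 1)] with s hs t
    have hs0 : s ≤ 0 := by linarith
    rw [em, min_eq_left hs0, mF_of_beta_one β (betaA_one' hβ (by linarith))]
  · -- `⊕` recovers `v`
    funext z
    obtain ⟨⟨s, hs0, hsR⟩, t⟩ := z
    show betaA β R s • evalP p1 s t + (1 - betaA β R s) • evalM p2 (s - R) (t - θ) = _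
    rw [ep, em, max_eq_left hs0, min_eq_left (by linarith : s - R ≤ 0),
      show s - R + R = s by ring, sub_add_cancel]
    unfold pF mF gammaA
    rw [solve_u (betaA β R s) (gammaA_ne' s) (evalZ hR0 v s t)
      (w (s, t) - (1 - 2 * betaA β R s) • A)]
    exact evalZ_eq hR0 v hs0 hsR t
  · -- `⊖` recovers `w`
    funext z
    obtain ⟨s, t⟩ := z
    show (-(1 - betaA β R s)) • (evalP p1 s t - avA R (p1, p2))
        + betaA β R s • (evalM p2 (s - R) (t - θ) - avA R (p1, p2)) = w (s, t)
    rw [hAv]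
    rcases lt_or_ge s 0 with hs | hs
    · have hb : betaA β R s = 1 := betaA_one hβ hR2 hs.le
      rw [em, min_eq_left (by linarith : s - R ≤ 0), show s - R + R = s by ring,
        sub_add_cancel, mF_of_beta_one β hb, hb]
      module
    · rcases le_or_gt s R with hsR | hsR
      · rw [ep, em, max_eq_left hs, min_eq_left (by linarith : s - R ≤ 0),
          show s - R + R = s by ring, sub_add_cancel]
        have key := solve_w (betaA β R s) (gammaA_ne' s) (evalZ hR0 v s t)
          (w (s, t) - (1 - 2 * betaA β R s) • A)
        unfold pF mF gammaA
        rw [show ∀ x y : EuclideanSpace ℝ (Fin (2 * n)),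
            (-(1 - betaA β R s)) • (x - A) + betaA β R s • (y - A)
              = ((-(1 - betaA β R s)) • x + betaA β R s • y)
                + (1 - 2 * betaA β R s) • A from fun x y => by module, key]
        module
      · have hb : betaA β R s = 0 := betaA_zero hβ hR2 hsR.le
        rw [ep, max_eq_left hs, pF_of_beta_zero β hb, hb]
        module

end Surj

end TG
open TG in
theorem total_gluing_map_isomorphism (n : ℕ) (β : ℝ → ℝ) (hβ : IsGluingCutoff β)
    (a : ℂ) (ha : 0 < ‖a‖) (ha' : ‖a‖ < 1 / 2)
    (R : ℝ) (hR : R = Real.exp (1 / ‖a‖) - Real.exp 1)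
    (ϑ : ℝ)
    (hϑ : a = ((‖a‖ : ℝ) : ℂ) *
      Complex.exp (((-(2 * Real.pi * ϑ) : ℝ) : ℂ) * Complex.I)) :
    -- additivity of `⊡_a` on `E`
    (∀ h h' : HalfPair n, memE h → memE h' →
      (∀ z, oplus β R (ϑ : S1) (h + h') z =
          oplus β R (ϑ : S1) h z + oplus β R (ϑ : S1) h' z) ∧
      (∀ z, ominus β R (ϑ : S1) (h + h') z =
          ominus β R (ϑ : S1) h z + ominus β R (ϑ : S1) h' z)) ∧
    -- homogeneity of `⊡_a` on `E`
    (∀ (c : ℝ) (h : HalfPair n), memE h →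
      (∀ z, oplus β R (ϑ : S1) (c • h) z = c • oplus β R (ϑ : S1) h z) ∧
      (∀ z, ominus β R (ϑ : S1) (c • h) z = c • ominus β R (ϑ : S1) h z)) ∧
    -- `⊡_a` is a bijection from `E` onto `E^a_+ ⊕ E^a_−`
    Set.BijOn (fun h : HalfPair n => (oplus β R (ϑ : S1) h, ominus β R (ϑ : S1) h))
      {h : HalfPair n | memE h}
      ({v | memEplus R v} ×ˢ {w | memEminus w}) ∧
    -- consequently `E = ker ⊕_a ⊕ ker ⊖_a`
    (∀ h : HalfPair n, memE h →
      ∃! qr : HalfPair n × HalfPair n,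
        memE qr.1 ∧ memE qr.2 ∧
          (∀ z, oplus β R (ϑ : S1) qr.1 z = 0) ∧
          (∀ z, ominus β R (ϑ : S1) qr.2 z = 0) ∧ h = qr.1 + qr.2) := by
  have hR2 : 2 ≤ R := by
    have h1 : (2 : ℝ) ≤ 1 / ‖a‖ := by
      rw [le_div_iff₀ ha]; linarith
    have h2 : Real.exp 2 ≤ Real.exp (1 / ‖a‖) := Real.exp_le_exp.2 h1
    have h3 : Real.exp 2 = Real.exp 1 * Real.exp 1 := by
      rw [← Real.exp_add]; norm_num
    rw [hR]
    nlinarith [h2, h3, Real.exp_one_gt_d9, Real.exp_one_lt_d9]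
  set θ : S1 := (ϑ : S1) with hθ
  refine ⟨?_, ?_, ⟨?_, ?_, ?_⟩, ?_⟩
  · -- additivity
    intro h h' hh hh'
    exact ⟨oplus_add h h', fun z => ominus_add hh.1 hh.2.1 hh'.1 hh'.2.1 z⟩
  · -- homogeneity
    intro c h _
    exact ⟨oplus_smul c h, ominus_smul c h⟩
  · -- maps to
    intro h hh
    exact ⟨continuous_oplus hβ hh.1 hh.2.1, memEminus_ominus hβ hR2 hh⟩
  · -- injective
    intro h hh h' hh' heq
    obtain ⟨ho, hm⟩ := Prod.ext_iff.1 heq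
    exact inj_aux hβ hR2 hh hh' ho hm
  · -- surjective
    intro y hy
    obtain ⟨h, hmem, ho, hm⟩ := surj_aux (θ := θ) hβ hR2 hy.1 hy.2
    exact ⟨h, hmem, Prod.ext ho hm⟩
  · -- decomposition
    intro h hh
    have memEminus0 : memEminus (fun _ : ℝ × S1 => (0 : EuclideanSpace ℝ (Fin (2 * n)))) := by
      refine ⟨continuous_const, 0, ?_, ?_⟩
      · exact tu_const (f := fun _ : S1 => (0 : EuclideanSpace ℝ (Fin (2 * n))))
      · simpa using tu_const (f := fun _ : S1 => (0 : EuclideanSpace ℝ (Fin (2 * n))))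
    obtain ⟨h1, hm1, e1o, e1m⟩ := surj_aux (θ := θ) hβ hR2
      (v := fun _ => 0) (w := ominus β R θ h) continuous_const (memEminus_ominus hβ hR2 hh)
    obtain ⟨h2, hm2, e2o, e2m⟩ := surj_aux (θ := θ) hβ hR2
      (v := oplus β R θ h) (w := fun _ => 0)
      (continuous_oplus hβ hh.1 hh.2.1) memEminus0
    have hsum : h1 + h2 = h := by
      refine inj_aux (θ := θ) hβ hR2 (memE_add hm1 hm2) hh ?_ ?_
      · funext z
        rw [oplus_add, e1o, e2o]
        simp
      · funext z
        rw [ominus_add hm1.1 hm1.2.1 hm2.1 hm2.2.1, e1m, e2m, add_zero]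
    refine ⟨(h1, h2), ⟨hm1, hm2, fun z => congrFun e1o z, fun z => congrFun e2m z,
      hsum.symm⟩, ?_⟩
    rintro ⟨q, r⟩ ⟨hq, hr, hoq, hmr, hqr⟩
    have emq : ∀ z, ominus β R θ q z = ominus β R θ h z := by
      intro z
      rw [hqr, ominus_add hq.1 hq.2.1 hr.1 hr.2.1, hmr z, add_zero]
    have eor : ∀ z, oplus β R θ r z = oplus β R θ h z := by
      intro z
      rw [hqr, oplus_add, hoq z, zero_add]
    have hq1 : q = h1 :=
      inj_aux hβ hR2 hq hm1 ((funext hoq).trans e1o.symm) ((funext emq).trans e1m.symm)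
    have hr2 : r = h2 :=
      inj_aux hβ hR2 hr hm2 ((funext eor).trans e2o.symm) ((funext fun z => hmr z).trans e2m.symm)
    exact Prod.ext hq1 hr2
end
end

section
/- For a ≠ 0, the projection π_a: E → E onto ker ⊖_a along ker ⊕_a, applied to (h⁺,h⁻) with π_a(h⁺,h⁻) = (η⁺,η⁻), is given explicitly by η⁺(s,t) = (1 − β_a/γ_a)·av + (β_a²/γ_a)·h⁺(s,t) + (β_a(1−β_a)/γ_a)·h⁻(s−R, t−θ), where av = av_a(h⁺,h⁻) is the average, β_a = β_a(s), γ_a = β_a² + (1−β_a)², and an analogous formula holds for η⁻. -/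
open Filter MeasureTheory

noncomputable section

/-!
STATEMENT 10. For `a ≠ 0`, the projection `π_a : E → E` onto `ker ⊖_a` along `ker ⊕_a`,
applied to `(h⁺,h⁻)` with `π_a(h⁺,h⁻) = (η⁺,η⁻)` — i.e. `⊕_a(η) = ⊕_a(h)` and
`⊖_a(η) = 0` — is given explicitly by
`η⁺(s,t) = (1 − β_a/γ_a)·av + (β_a²/γ_a)·h⁺(s,t) + (β_a(1−β_a)/γ_a)·h⁻(s−R, t−ϑ)`,
with `av = av_a(h⁺,h⁻)`, `β_a = β_a(s)`, `γ_a = β_a² + (1−β_a)²`, and the analogous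
formula
`η⁻(s',t') = (1 − β_a(−s')/γ_a(−s'))·av + (β_a(−s')(1−β_a(−s'))/γ_a(−s'))·h⁺(s'+R,t'+ϑ)
  + (β_a(−s')²/γ_a(−s'))·h⁻(s',t')` holds for `η⁻`.
-/
theorem gluing_projection_formula (n : ℕ) (β : ℝ → ℝ) (hβ : IsGluingCutoff β)
    (a : ℂ) (ha : 0 < ‖a‖) (ha' : ‖a‖ < 1 / 2)
    (R : ℝ) (hR : R = Real.exp (1 / ‖a‖) - Real.exp 1)
    (ϑ : ℝ)
    (hϑ : a = ((‖a‖ : ℝ) : ℂ) *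
      Complex.exp (((-(2 * Real.pi * ϑ) : ℝ) : ℂ) * Complex.I))
    (h η : HalfPair n) (hh : memE h) (hη : memE η)
    -- `η = π_a(h)`: the projection onto `ker ⊖_a` along `ker ⊕_a`
    (hproj1 : ∀ z, oplus β R (ϑ : S1) η z = oplus β R (ϑ : S1) h z)
    (hproj2 : ∀ z, ominus β R (ϑ : S1) η z = 0) :
    (∀ s : ℝ, 0 ≤ s → ∀ t : S1,
      evalP η.1 s t =
        (1 - betaA β R s / gammaA β R s) • avA R h +
          (betaA β R s ^ 2 / gammaA β R s) • evalP h.1 s t +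
          (betaA β R s * (1 - betaA β R s) / gammaA β R s) •
            evalM h.2 (s - R) (t - (ϑ : S1))) ∧
    (∀ s' : ℝ, s' ≤ 0 → ∀ t' : S1,
      evalM η.2 s' t' =
        (1 - betaA β R (-s') / gammaA β R (-s')) • avA R h +
          (betaA β R (-s') * (1 - betaA β R (-s')) / gammaA β R (-s')) •
            evalP h.1 (s' + R) (t' + (ϑ : S1)) +
          (betaA β R (-s') ^ 2 / gammaA β R (-s')) • evalM h.2 s' t') := by

  obtain ⟨-, hβsym, hβone, -⟩ := hβ
  obtain ⟨hηP, hηM, -⟩ := hη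
  obtain ⟨hhP, hhM, -⟩ := hh
  set ϑS : S1 := (ϑ : S1) with hϑS
  have hβhalf : β 0 = 1 / 2 := by have := hβsym 0; rw [neg_zero] at this; linarith
  have hβzero : ∀ x : ℝ, 1 ≤ x → β x = 0 := by
    intro x hx
    have h1 := hβsym x
    rw [hβone (-x) (by linarith)] at h1
    linarith
  have hRbig : 2 < R := by
    have h2 : (2 : ℝ) < 1 / ‖a‖ := by
      rw [lt_div_iff₀ ha]; linarith
    have h3 : Real.exp 2 ≤ Real.exp (1 / ‖a‖) := Real.exp_le_exp.mpr h2.le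
    have h4 : Real.exp 2 = Real.exp 1 * Real.exp 1 := by
      rw [← Real.exp_add]; norm_num
    nlinarith [Real.exp_one_gt_d9, Real.exp_one_lt_d9]
  have hγpos : ∀ b : ℝ, (0 : ℝ) < b ^ 2 + (1 - b) ^ 2 := by
    intro b; nlinarith [sq_nonneg b, sq_nonneg (1 - b), sq_nonneg (2 * b - 1)]
  have integ : ∀ g : S1 → EuclideanSpace ℝ (Fin (2 * n)), Continuous g → Integrable g :=
    fun g hg => hg.integrable_of_hasCompactSupport (HasCompactSupport.of_compactSpace g)
  -- the average of `η` agrees with that of `h`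
  have hbhalf : betaA β R (R / 2) = 1 / 2 := by
    simp only [betaA, sub_self, hβhalf]
  have hkeyav : ∀ t : S1,
      evalP η.1 (R / 2) t + evalM η.2 (-(R / 2)) (t - ϑS)
        = evalP h.1 (R / 2) t + evalM h.2 (-(R / 2)) (t - ϑS) := by
    intro t
    have e1 : betaA β R (R / 2) • evalP η.1 (R / 2) t
        + (1 - betaA β R (R / 2)) • evalM η.2 (R / 2 - R) (t - ϑS)
        = betaA β R (R / 2) • evalP h.1 (R / 2) t
        + (1 - betaA β R (R / 2)) • evalM h.2 (R / 2 - R) (t - ϑS) :=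
      hproj1 (⟨R / 2, by constructor <;> linarith⟩, t)
    rw [hbhalf, show R / 2 - R = -(R / 2) by ring] at e1
    linear_combination (norm := module) (2 : ℝ) • e1
  have hav : avA R η = avA R h := by
    have cPη : Continuous fun t : S1 => evalP η.1 (R / 2) t :=
      hηP.comp (continuous_const.prodMk continuous_id)
    have cMη : Continuous fun t : S1 => evalM η.2 (-(R / 2)) t :=
      hηM.comp (continuous_const.prodMk continuous_id)
    have cPh : Continuous fun t : S1 => evalP h.1 (R / 2) t :=
      hhP.comp (continuous_const.prodMk continuous_id)
    have cMh : Continuous fun t : S1 => evalM h.2 (-(R / 2)) t :=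
      hhM.comp (continuous_const.prodMk continuous_id)
    have csub : Continuous fun t : S1 => t - ϑS := continuous_id.sub continuous_const
    have i1 : Integrable fun t : S1 => evalP η.1 (R / 2) t := integ _ cPη
    have i2 : Integrable fun t : S1 => evalM η.2 (-(R / 2)) (t - ϑS) :=
      integ _ (cMη.comp csub)
    have i3 : Integrable fun t : S1 => evalP h.1 (R / 2) t := integ _ cPh
    have i4 : Integrable fun t : S1 => evalM h.2 (-(R / 2)) (t - ϑS) :=
      integ _ (cMh.comp csub)
    have t2 : (∫ t : S1, evalM η.2 (-(R / 2)) t)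
        = ∫ t : S1, evalM η.2 (-(R / 2)) (t - ϑS) :=
      (integral_sub_right_eq_self (fun t => evalM η.2 (-(R / 2)) t) ϑS).symm
    have t4 : (∫ t : S1, evalM h.2 (-(R / 2)) t)
        = ∫ t : S1, evalM h.2 (-(R / 2)) (t - ϑS) :=
      (integral_sub_right_eq_self (fun t => evalM h.2 (-(R / 2)) t) ϑS).symm
    simp only [avA]
    rw [t2, t4, ← integral_add i1 i2, ← integral_add i3 i4]
    congr 1
    exact integral_congr_ae (Filter.Eventually.of_forall hkeyav)
  constructor
  · -- formula for η⁺
    intro s hs t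
    rcases le_or_gt s R with hsR | hsR
    · have e1 : betaA β R s • evalP η.1 s t
          + (1 - betaA β R s) • evalM η.2 (s - R) (t - ϑS)
          = betaA β R s • evalP h.1 s t
          + (1 - betaA β R s) • evalM h.2 (s - R) (t - ϑS) :=
        hproj1 (⟨s, hs, hsR⟩, t)
      have e2 : (-(1 - betaA β R s)) • (evalP η.1 s t - avA R η)
          + betaA β R s • (evalM η.2 (s - R) (t - ϑS) - avA R η) = 0 := hproj2 (s, t)
      rw [hav] at e2
      set b := betaA β R s with hb
      have key : (b ^ 2 + (1 - b) ^ 2) • evalP η.1 s t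
          = b ^ 2 • evalP h.1 s t + (b * (1 - b)) • evalM h.2 (s - R) (t - ϑS)
            + ((b ^ 2 + (1 - b) ^ 2) - b) • avA R h := by
        linear_combination (norm := module) b • e1 - (1 - b) • e2
      have hγ : (b ^ 2 + (1 - b) ^ 2) ≠ 0 := (hγpos b).ne'
      have hQ : evalP η.1 s t = (b ^ 2 + (1 - b) ^ 2)⁻¹ •
          (b ^ 2 • evalP h.1 s t + (b * (1 - b)) • evalM h.2 (s - R) (t - ϑS)
            + ((b ^ 2 + (1 - b) ^ 2) - b) • avA R h) := by
        rw [← key, smul_smul, inv_mul_cancel₀ hγ, one_smul]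
      rw [hQ, gammaA, ← hb]
      match_scalars <;> field_simp
    · have hb0 : betaA β R s = 0 := hβzero (s - R / 2) (by linarith)
      have e2 : (-(1 - betaA β R s)) • (evalP η.1 s t - avA R η)
          + betaA β R s • (evalM η.2 (s - R) (t - ϑS) - avA R η) = 0 := hproj2 (s, t)
      rw [hav, hb0] at e2
      simp only [sub_zero, zero_smul, add_zero, neg_smul, one_smul, neg_eq_zero,
        sub_eq_zero] at e2
      rw [gammaA, hb0]
      norm_num [e2]
  · -- formula for η⁻
    intro s' hs' t'
    have hbrel : betaA β R (s' + R) = 1 - betaA β R (-s') := by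
      have h1 := hβsym (s' + R / 2)
      have h2 : s' + R - R / 2 = s' + R / 2 := by ring
      have h3 : -s' - R / 2 = -(s' + R / 2) := by ring
      simp only [betaA, h2, h3]
      linarith
    rcases le_or_gt (-R) s' with hsR | hsR
    · have e1 : betaA β R (s' + R) • evalP η.1 (s' + R) (t' + ϑS)
          + (1 - betaA β R (s' + R)) • evalM η.2 (s' + R - R) (t' + ϑS - ϑS)
          = betaA β R (s' + R) • evalP h.1 (s' + R) (t' + ϑS)
          + (1 - betaA β R (s' + R)) • evalM h.2 (s' + R - R) (t' + ϑS - ϑS) :=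
        hproj1 (⟨s' + R, by constructor <;> linarith⟩, t' + ϑS)
      have e2 : (-(1 - betaA β R (s' + R))) • (evalP η.1 (s' + R) (t' + ϑS) - avA R η)
          + betaA β R (s' + R) •
            (evalM η.2 (s' + R - R) (t' + ϑS - ϑS) - avA R η) = 0 :=
        hproj2 (s' + R, t' + ϑS)
      rw [hav] at e2
      rw [hbrel, add_sub_cancel_right, add_sub_cancel_right] at e1 e2
      set B := betaA β R (-s') with hB
      have key : (B ^ 2 + (1 - B) ^ 2) • evalM η.2 s' t'
          = (B * (1 - B)) • evalP h.1 (s' + R) (t' + ϑS) + B ^ 2 • evalM h.2 s' t'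
            + ((B ^ 2 + (1 - B) ^ 2) - B) • avA R h := by
        linear_combination (norm := module) B • e1 + (1 - B) • e2
      have hγ : (B ^ 2 + (1 - B) ^ 2) ≠ 0 := (hγpos B).ne'
      have hQ : evalM η.2 s' t' = (B ^ 2 + (1 - B) ^ 2)⁻¹ •
          ((B * (1 - B)) • evalP h.1 (s' + R) (t' + ϑS) + B ^ 2 • evalM h.2 s' t'
            + ((B ^ 2 + (1 - B) ^ 2) - B) • avA R h) := by
        rw [← key, smul_smul, inv_mul_cancel₀ hγ, one_smul]
      rw [hQ, gammaA, ← hB]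
      match_scalars <;> field_simp
    · have hb0 : betaA β R (-s') = 0 := hβzero (-s' - R / 2) (by linarith)
      have hb1 : betaA β R (s' + R) = 1 := hβone (s' + R - R / 2) (by linarith)
      have e2 : (-(1 - betaA β R (s' + R))) • (evalP η.1 (s' + R) (t' + ϑS) - avA R η)
          + betaA β R (s' + R) •
            (evalM η.2 (s' + R - R) (t' + ϑS - ϑS) - avA R η) = 0 :=
        hproj2 (s' + R, t' + ϑS)
      rw [hav, hb1, add_sub_cancel_right, add_sub_cancel_right] at e2
      simp only [sub_self, neg_zero, zero_smul, zero_add, one_smul, sub_eq_zero] at e2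
      rw [gammaA, hb0]
      norm_num [e2]
end
end
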